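/- The identity ∂_i Ŝ_j − ∂_j Ŝ_i + 2(Ŝ_i Ŝ_j − Ŝ_j Ŝ_i) = 0 holds on U for all i, j; consequently the curvature of the Levi-Civita connection of g (with Christoffel symbols Ŝ_i) is R^D_{ij} = ∂_i Ŝ_j − ∂_j Ŝ_i + Ŝ_i Ŝ_j − Ŝ_j Ŝ_i = −(Ŝ_i Ŝ_j − Ŝ_j Ŝ_i). -/

import Mathlib

open Matrix

noncomputable section

/-- Partial derivative of a function on `ℝⁿ` in the `i`-th coordinate direction. -/
def pd {n : ℕ} (i : Fin n) (f : (Fin n → ℝ) → ℝ) (x : Fin n → ℝ) : ℝ :=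
  fderiv ℝ f x (Pi.single i 1)

/-- Entrywise partial derivative of a matrix-valued map on `ℝⁿ`. -/
def mpd {n : ℕ} (i : Fin n) (F : (Fin n → ℝ) → Matrix (Fin n) (Fin n) ℝ)
    (x : Fin n → ℝ) : Matrix (Fin n) (Fin n) ℝ :=
  Matrix.of fun a b => pd i (fun y => F y a b) x

/-- Hessian metric data on a set `U ⊆ ℝⁿ`: a smooth symmetric invertible
matrix-valued map whose cubic form `S_{ijk} = ∂_k g_{ij}` is totally symmetric. -/
structure HessianData (n : ℕ) (U : Set (Fin n → ℝ))
    (g : (Fin n → ℝ) → Matrix (Fin n) (Fin n) ℝ) : Prop where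
  isOpen : IsOpen U
  smooth : ∀ i j, ContDiffOn ℝ (⊤ : ℕ∞) (fun x => g x i j) U
  symm : ∀ x ∈ U, (g x).IsSymm
  invertible : ∀ x ∈ U, IsUnit (g x).det
  cubic_symm : ∀ x ∈ U, ∀ i j k : Fin n,
    pd k (fun y => g y i j) x = pd j (fun y => g y i k) x

/-- `Ŝᵢ(x) = ½ g(x)⁻¹ ∂ᵢ g(x)`. -/
def Shat {n : ℕ} (g : (Fin n → ℝ) → Matrix (Fin n) (Fin n) ℝ)
    (i : Fin n) (x : Fin n → ℝ) : Matrix (Fin n) (Fin n) ℝ :=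
  (2⁻¹ : ℝ) • ((g x)⁻¹ * mpd i g x)

section Aux
variable {n : ℕ} {x : Fin n → ℝ} {i j : Fin n}

lemma pd_eventuallyEq {f h : (Fin n → ℝ) → ℝ} (hfh : f =ᶠ[nhds x] h) : pd i f x = pd i h x := by
  unfold pd; rw [hfh.fderiv_eq]

lemma pd_const {c : ℝ} : pd i (fun _ => c) x = 0 := by
  unfold pd; rw [fderiv_fun_const]; simp

lemma pd_mul {f h : (Fin n → ℝ) → ℝ} (hf : DifferentiableAt ℝ f x)
    (hh : DifferentiableAt ℝ h x) :
    pd i (fun y => f y * h y) x = pd i f x * h x + f x * pd i h x := by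
  unfold pd; rw [fderiv_fun_mul hf hh]; simp [smul_eq_mul]; ring

lemma pd_sum {ι : Type*} (s : Finset ι) (f : ι → (Fin n → ℝ) → ℝ)
    (hf : ∀ c ∈ s, DifferentiableAt ℝ (f c) x) :
    pd i (fun y => ∑ c ∈ s, f c y) x = ∑ c ∈ s, pd i (f c) x := by
  unfold pd; rw [fderiv_fun_sum hf]; simp

lemma pd_const_mul {f : (Fin n → ℝ) → ℝ} (hf : DifferentiableAt ℝ f x) (c : ℝ) :
    pd i (fun y => c * f y) x = c * pd i f x := by
  unfold pd; rw [fderiv_const_mul hf]; simp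

lemma contDiffAt_finset_prod {ι : Type*} (s : Finset ι) (f : ι → (Fin n → ℝ) → ℝ)
    (hf : ∀ c ∈ s, ContDiffAt ℝ (⊤ : ℕ∞) (f c) x) :
    ContDiffAt ℝ (⊤ : ℕ∞) (fun y => ∏ c ∈ s, f c y) x := by
  classical
  induction s using Finset.induction with
  | empty => simpa using contDiffAt_const
  | insert _ _ hnotmem ih =>
    simp only [Finset.prod_insert hnotmem]
    exact (hf _ (Finset.mem_insert_self _ _)).mul
      (ih fun c hc => hf c (Finset.mem_insert_of_mem hc))

lemma contDiffAt_det {F : (Fin n → ℝ) → Matrix (Fin n) (Fin n) ℝ}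
    (hF : ∀ a b, ContDiffAt ℝ (⊤ : ℕ∞) (fun y => F y a b) x) :
    ContDiffAt ℝ (⊤ : ℕ∞) (fun y => (F y).det) x := by
  simp only [Matrix.det_apply]
  apply ContDiffAt.sum
  intro σ _
  have : (fun y => Equiv.Perm.sign σ • ∏ a, F y (σ a) a)
      = fun y => ((Equiv.Perm.sign σ : ℤ) : ℝ) * ∏ a, F y (σ a) a := by
    ext y; simp [Units.smul_def, zsmul_eq_mul]
  rw [this]
  exact contDiffAt_const.mul (contDiffAt_finset_prod _ _ fun c _ => hF (σ c) c)

lemma contDiffAt_adjugate {F : (Fin n → ℝ) → Matrix (Fin n) (Fin n) ℝ}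
    (hF : ∀ a b, ContDiffAt ℝ (⊤ : ℕ∞) (fun y => F y a b) x) (a b : Fin n) :
    ContDiffAt ℝ (⊤ : ℕ∞) (fun y => (F y).adjugate a b) x := by
  simp only [Matrix.adjugate_apply]
  apply contDiffAt_det
  intro a' b'
  simp only [Matrix.updateRow_apply]
  by_cases h : a' = b
  · simp only [h, if_true]; exact contDiffAt_const
  · simp only [h, if_false]; exact hF a' b'

lemma contDiffAt_inv_entry {F : (Fin n → ℝ) → Matrix (Fin n) (Fin n) ℝ}
    (hF : ∀ a b, ContDiffAt ℝ (⊤ : ℕ∞) (fun y => F y a b) x)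
    (hdet : (F x).det ≠ 0) (a b : Fin n) :
    ContDiffAt ℝ (⊤ : ℕ∞) (fun y => (F y)⁻¹ a b) x := by
  have : (fun y => (F y)⁻¹ a b) = fun y => ((F y).det)⁻¹ * (F y).adjugate a b := by
    ext y
    rw [Matrix.inv_def]
    simp [Ring.inverse_eq_inv', Matrix.smul_apply, smul_eq_mul]
  rw [this]
  exact ((contDiffAt_det hF).inv hdet).mul (contDiffAt_adjugate hF a b)

lemma contDiffAt_pd {f : (Fin n → ℝ) → ℝ} (hf : ContDiffAt ℝ (⊤ : ℕ∞) f x) :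
    ContDiffAt ℝ (⊤ : ℕ∞) (fun y => pd j f y) x := by
  have h1 : ContDiffAt ℝ (⊤ : ℕ∞) (fderiv ℝ f) x := hf.fderiv_right (by simp)
  exact h1.clm_apply contDiffAt_const

lemma pd_pd_symm {f : (Fin n → ℝ) → ℝ} (hf : ContDiffAt ℝ (⊤ : ℕ∞) f x) :
    pd i (fun y => pd j f y) x = pd j (fun y => pd i f y) x := by
  have h2 : ContDiffAt ℝ 2 f x := hf.of_le (by exact WithTop.coe_le_coe.mpr le_top)
  have hd : DifferentiableAt ℝ (fderiv ℝ f) x :=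
    (h2.fderiv_right (m := 1) (by norm_num)).differentiableAt one_ne_zero
  have key : ∀ v w : (Fin n) → ℝ,
      fderiv ℝ (fun y => fderiv ℝ f y v) x w = fderiv ℝ (fderiv ℝ f) x w v := by
    intro v w
    rw [fderiv_clm_apply hd (differentiableAt_const v)]
    simp
  have hsymm := h2.isSymmSndFDerivAt (by simp [minSmoothness_of_isRCLikeNormedField])
  show fderiv ℝ (fun y => fderiv ℝ f y (Pi.single j 1)) x (Pi.single i 1)
      = fderiv ℝ (fun y => fderiv ℝ f y (Pi.single i 1)) x (Pi.single j 1)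
  rw [key, key, hsymm.eq]

lemma mpd_apply {F : (Fin n → ℝ) → Matrix (Fin n) (Fin n) ℝ} {a b : Fin n} :
    mpd i F x a b = pd i (fun y => F y a b) x := rfl

lemma mpd_congr {F H : (Fin n → ℝ) → Matrix (Fin n) (Fin n) ℝ}
    (hFH : F =ᶠ[nhds x] H) : mpd i F x = mpd i H x := by
  ext a b
  exact pd_eventuallyEq (hFH.mono fun y hy => by simp only []; rw [hy])

lemma mpd_const {A : Matrix (Fin n) (Fin n) ℝ} : mpd i (fun _ => A) x = 0 := by
  ext a b
  simpa [mpd_apply] using (pd_const (x := x) (i := i) (c := A a b))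

lemma mpd_mul {F H : (Fin n → ℝ) → Matrix (Fin n) (Fin n) ℝ}
    (hF : ∀ a b, DifferentiableAt ℝ (fun y => F y a b) x)
    (hH : ∀ a b, DifferentiableAt ℝ (fun y => H y a b) x) :
    mpd i (fun y => F y * H y) x = mpd i F x * H x + F x * mpd i H x := by
  ext a b
  have : (fun y => (F y * H y) a b) = fun y => ∑ c, F y a c * H y c b := by
    ext y; simp [Matrix.mul_apply]
  rw [mpd_apply, this, pd_sum _ (fun c y => F y a c * H y c b) (fun c _ => ((hF a c).mul (hH c b)))]
  simp only [Matrix.add_apply, Matrix.mul_apply, mpd_apply]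
  rw [← Finset.sum_add_distrib]
  exact Finset.sum_congr rfl fun c _ => pd_mul (hF a c) (hH c b)

lemma mpd_smul (c : ℝ) {F : (Fin n → ℝ) → Matrix (Fin n) (Fin n) ℝ}
    (hF : ∀ a b, DifferentiableAt ℝ (fun y => F y a b) x) :
    mpd i (fun y => c • F y) x = c • mpd i F x := by
  ext a b
  have : (fun y => (c • F y) a b) = fun y => c * F y a b := by
    ext y; simp [Matrix.smul_apply]
  rw [mpd_apply, this, pd_const_mul (hF a b)]
  simp [mpd_apply]

end Aux

/-- `∂ᵢŜⱼ − ∂ⱼŜᵢ + 2[Ŝᵢ,Ŝⱼ] = 0` on `U`, and consequently the curvature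
of the Levi-Civita connection of `g` is `R^D_{ij} = −[Ŝᵢ,Ŝⱼ]`. -/
theorem stmt_6 {n : ℕ} (hn : 1 ≤ n) (U : Set (Fin n → ℝ))
    (g : (Fin n → ℝ) → Matrix (Fin n) (Fin n) ℝ)
    (hg : HessianData n U g) :
    ∀ x ∈ U, ∀ i j : Fin n,
      (mpd i (fun y => Shat g j y) x - mpd j (fun y => Shat g i y) x
        + (2 : ℝ) • (Shat g i x * Shat g j x - Shat g j x * Shat g i x) = 0) ∧
      (mpd i (fun y => Shat g j y) x - mpd j (fun y => Shat g i y) x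
        + Shat g i x * Shat g j x - Shat g j x * Shat g i x
        = -(Shat g i x * Shat g j x - Shat g j x * Shat g i x)) := by
  intro x hx i j
  have hxU : U ∈ nhds x := hg.isOpen.mem_nhds hx
  have hdg : ∀ a b, ContDiffAt ℝ (⊤ : ℕ∞) (fun y => g y a b) x := fun a b =>
    (hg.smooth a b).contDiffAt hxU
  have hdet : (g x).det ≠ 0 := (hg.invertible x hx).ne_zero
  set P := (g x)⁻¹ with hPdef
  have hGinvC : ∀ a b, ContDiffAt ℝ (⊤ : ℕ∞) (fun y => (g y)⁻¹ a b) x :=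
    contDiffAt_inv_entry hdg hdet
  have hGinvD : ∀ a b, DifferentiableAt ℝ (fun y => (g y)⁻¹ a b) x := fun a b =>
    (hGinvC a b).differentiableAt (by simp)
  have hgD : ∀ a b, DifferentiableAt ℝ (fun y => g y a b) x := fun a b =>
    (hdg a b).differentiableAt (by simp)
  have hPgC : ∀ (k : Fin n) a b, ContDiffAt ℝ (⊤ : ℕ∞) (fun y => mpd k g y a b) x := fun k a b =>
    contDiffAt_pd (j := k) (hdg a b)
  have hPgD : ∀ (k : Fin n) a b, DifferentiableAt ℝ (fun y => mpd k g y a b) x := fun k a b =>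
    (hPgC k a b).differentiableAt (by simp)
  have hProdD : ∀ (l : Fin n) a b,
      DifferentiableAt ℝ (fun y => ((g y)⁻¹ * mpd l g y) a b) x := by
    intro l a b
    have : (fun y => ((g y)⁻¹ * mpd l g y) a b)
        = fun y => ∑ c, (g y)⁻¹ a c * mpd l g y c b := by
      ext y; simp [Matrix.mul_apply]
    rw [this]
    exact DifferentiableAt.fun_sum fun c _ => (hGinvD a c).mul (hPgD l c b)
  have key_inv : ∀ k : Fin n, mpd k (fun y => (g y)⁻¹) x = -(P * mpd k g x * P) := by
    intro k
    have h1 : mpd k (fun y => (g y)⁻¹ * g y) x = 0 := by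
      rw [mpd_congr (?_ : (fun y => (g y)⁻¹ * g y) =ᶠ[nhds x] fun _ => 1), mpd_const]
      filter_upwards [hxU] with y hy
      exact Matrix.nonsing_inv_mul (g y) (hg.invertible y hy)
    have h2 : mpd k (fun y => (g y)⁻¹ * g y) x
        = mpd k (fun y => (g y)⁻¹) x * g x + P * mpd k g x := mpd_mul hGinvD hgD
    have h3 : mpd k (fun y => (g y)⁻¹) x * g x = -(P * mpd k g x) := by
      rw [h2] at h1
      exact eq_neg_of_add_eq_zero_left h1
    calc mpd k (fun y => (g y)⁻¹) x
        = mpd k (fun y => (g y)⁻¹) x * (g x * P) := by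
          rw [Matrix.mul_nonsing_inv _ (hg.invertible x hx), mul_one]
      _ = (mpd k (fun y => (g y)⁻¹) x * g x) * P := by rw [mul_assoc]
      _ = -(P * mpd k g x * P) := by rw [h3]; simp [neg_mul]
  have key_S : ∀ k l : Fin n, mpd k (fun y => Shat g l y) x
      = (2⁻¹ : ℝ) • (-(P * mpd k g x * P) * mpd l g x
          + P * mpd k (fun y => mpd l g y) x) := by
    intro k l
    have hfun : (fun y => Shat g l y) = fun y => (2⁻¹:ℝ) • ((g y)⁻¹ * mpd l g y) := rfl
    rw [hfun, mpd_smul _ (hProdD l), mpd_mul hGinvD (hPgD l), key_inv k]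
  have hQ : mpd i (fun y => mpd j g y) x = mpd j (fun y => mpd i g y) x := by
    ext a b
    exact pd_pd_symm (hdg a b)
  have hSi : Shat g i x = (2⁻¹:ℝ) • (P * mpd i g x) := rfl
  have hSj : Shat g j x = (2⁻¹:ℝ) • (P * mpd j g x) := rfl
  constructor
  · rw [key_S i j, key_S j i, hQ, hSi, hSj]
    simp only [smul_mul_assoc, mul_smul_comm, smul_smul, neg_mul, mul_neg, mul_assoc]
    module
  · rw [key_S i j, key_S j i, hQ, hSi, hSj]
    simp only [smul_mul_assoc, mul_smul_comm, smul_smul, neg_mul, mul_neg, mul_assoc]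
    module
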